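/- arXiv:0706.4353 — 2 statements merged into one kernel-verified Lean document; each statement's English description precedes it below -/
import Mathlib

section
/- Let J ⊆ {1,…,m} with 1 < |J| ≤ m/2. Then the convex cone in ℚ^m generated over ℚ_{≥0} by the vectors u_{ij} with exactly one of i, j lying in J equals {s ∈ ℚ^m : s_l ≥ 0 for all l, and Σ_{i∈J} s_i = Σ_{j∉J} s_j}. In particular, this cone equals the intersection of the cone generated by all the u_{ij}, 1 ≤ i < j ≤ m, with the hyperplane ℋ_J = {s ∈ ℚ^m : Σ_{i∈J} s_i = Σ_{j∉J} s_j} (the inequalities 2 s_l ≤ s_1 + ⋯ + s_m being automatic on this set). -/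
/-!
Both sides of a nonnegative `s ∈ ℋ_J` carry the same mass `T = ∑_{i ∈ J} s i`. The product
coupling `c i j = s i * s j / T` (`i ∈ J`, `j ∉ J`) has marginals `s|_J` and `s|_Jᶜ`, so
`s = ∑ c i j • u_{ij}` is a nonnegative combination of the `u_{ij}` crossing `J`. Conversely these
generators are nonnegative and lie in `ℋ_J`, and so does every vector of the cone they span.
-/

/-- The convex cone in `ℚ^m` generated over `ℚ_{≥0}` by a set `S`:
all finite nonnegative rational combinations of elements of `S`. -/
def coneGen {m : ℕ} (S : Set (Fin m → ℚ)) : Set (Fin m → ℚ) :=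
  {v | ∃ (s : Finset (Fin m → ℚ)) (c : (Fin m → ℚ) → ℚ),
    (∀ w ∈ s, 0 ≤ c w ∧ w ∈ S) ∧ v = ∑ w ∈ s, c w • w}

/-- The vector `u_{ij} ∈ ℚ^m` with entries `1` at positions `i` and `j` and `0`
elsewhere. -/
def uvec {m : ℕ} (i j : Fin m) : Fin m → ℚ := fun l => if l = i ∨ l = j then 1 else 0

section ConeGen

variable {m : ℕ}

theorem coneGen_mono {S T : Set (Fin m → ℚ)} (h : S ⊆ T) : coneGen S ⊆ coneGen T := by
  rintro v ⟨t, c, hc, rfl⟩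
  exact ⟨t, c, fun w hw => ⟨(hc w hw).1, h (hc w hw).2⟩, rfl⟩

theorem nonneg_of_mem_coneGen {S : Set (Fin m → ℚ)} (hS : ∀ v ∈ S, 0 ≤ v) {v : Fin m → ℚ}
    (hv : v ∈ coneGen S) : 0 ≤ v := by
  obtain ⟨t, c, hc, rfl⟩ := hv
  exact Finset.sum_nonneg fun w hw => smul_nonneg (hc w hw).1 (hS w (hc w hw).2)

theorem coneGen_subset_submodule {S : Set (Fin m → ℚ)} {p : Submodule ℚ (Fin m → ℚ)}
    (hS : S ⊆ p) : coneGen S ⊆ p := by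
  rintro v ⟨t, c, hc, rfl⟩
  exact p.sum_mem fun w hw => p.smul_mem _ (hS (hc w hw).2)

/-- Generators may be repeated in the family: coefficients of equal vectors are merged. -/
theorem sum_smul_mem_coneGen {ι : Type*} {S : Set (Fin m → ℚ)} (t : Finset ι)
    (c : ι → ℚ) (f : ι → Fin m → ℚ) (hc : ∀ i ∈ t, 0 ≤ c i) (hf : ∀ i ∈ t, f i ∈ S) :
    ∑ i ∈ t, c i • f i ∈ coneGen S := by
  classical
  refine ⟨t.image f, fun w => ∑ i ∈ t with f i = w, c i, fun w hw => ⟨?_, ?_⟩, ?_⟩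
  · exact Finset.sum_nonneg fun i hi => hc i (Finset.mem_filter.1 hi).1
  · obtain ⟨i, hi, rfl⟩ := Finset.mem_image.1 hw
    exact hf i hi
  · rw [← Finset.sum_fiberwise_of_maps_to (g := f) (t := t.image f)
      (fun i hi => Finset.mem_image_of_mem f hi)]
    refine Finset.sum_congr rfl fun w _ => ?_
    rw [Finset.sum_smul]
    exact Finset.sum_congr rfl fun i hi => by rw [(Finset.mem_filter.1 hi).2]

end ConeGen

section Uvec

variable {m : ℕ}

theorem uvec_comm (i j : Fin m) : uvec i j = uvec j i := by
  funext l; simp [uvec, or_comm]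

theorem uvec_nonneg (i j : Fin m) : 0 ≤ uvec i j := fun l => by
  unfold uvec; split <;> norm_num

theorem uvec_eq_single_add_single {i j : Fin m} (h : i ≠ j) :
    uvec i j = Pi.single i 1 + Pi.single j 1 := by
  funext l
  by_cases hi : l = i <;> by_cases hj : l = j <;> simp_all [uvec]

theorem sum_uvec_apply {i j : Fin m} (h : i ≠ j) (F : Finset (Fin m)) :
    ∑ l ∈ F, uvec i j l = (if i ∈ F then 1 else 0) + (if j ∈ F then 1 else 0) := by
  simp [uvec_eq_single_add_single h, Finset.sum_add_distrib, Pi.single_apply]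

theorem sum_smul_uvec_eq_of_marginals {J : Finset (Fin m)} {s : Fin m → ℚ}
    (c : Fin m → Fin m → ℚ) (hrow : ∀ i ∈ J, ∑ j ∈ Jᶜ, c i j = s i)
    (hcol : ∀ j ∈ Jᶜ, ∑ i ∈ J, c i j = s j) :
    ∑ i ∈ J, ∑ j ∈ Jᶜ, c i j • uvec i j = s := by
  have hne : ∀ i ∈ J, ∀ j ∈ Jᶜ, i ≠ j := fun i hi j hj h =>
    Finset.mem_compl.1 hj (h ▸ hi)
  have single_sum (k : Fin m) (t : Finset (Fin m)) (g : Fin m → ℚ) :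
      ∑ x ∈ t, (Pi.single k (g x) : Fin m → ℚ) = Pi.single k (∑ x ∈ t, g x) :=
    (map_sum (AddMonoidHom.single (fun _ : Fin m => ℚ) k) g t).symm
  calc ∑ i ∈ J, ∑ j ∈ Jᶜ, c i j • uvec i j
      = ∑ i ∈ J, ∑ j ∈ Jᶜ, (Pi.single i (c i j) + Pi.single j (c i j)) :=
        Finset.sum_congr rfl fun i hi => Finset.sum_congr rfl fun j hj => by
          rw [uvec_eq_single_add_single (hne i hi j hj), smul_add, ← Pi.single_smul',
            ← Pi.single_smul', smul_eq_mul, mul_one]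
    _ = ∑ i ∈ J, Pi.single i (∑ j ∈ Jᶜ, c i j) + ∑ j ∈ Jᶜ, Pi.single j (∑ i ∈ J, c i j) := by
        simp only [Finset.sum_add_distrib, single_sum]
        rw [Finset.sum_comm (s := J)]
        simp only [single_sum]
    _ = ∑ i ∈ J, Pi.single i (s i) + ∑ j ∈ Jᶜ, Pi.single j (s j) := by
        rw [Finset.sum_congr rfl fun i hi => congrArg (Pi.single i) (hrow i hi),
          Finset.sum_congr rfl fun j hj => congrArg (Pi.single j) (hcol j hj)]
    _ = s := by rw [Finset.sum_add_sum_compl, Finset.univ_sum_single]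

/-- The hyperplane `ℋ_J`. -/
def balanceHyperplane (J : Finset (Fin m)) : Submodule ℚ (Fin m → ℚ) where
  carrier := {s | ∑ i ∈ J, s i = ∑ j ∈ Jᶜ, s j}
  add_mem' {s t} (hs : ∑ i ∈ J, s i = _) (ht : ∑ i ∈ J, t i = _) := by
    change ∑ i ∈ J, (s i + t i) = ∑ j ∈ Jᶜ, (s j + t j)
    rw [Finset.sum_add_distrib, Finset.sum_add_distrib, hs, ht]
  zero_mem' := by simp
  smul_mem' c s (hs : ∑ i ∈ J, s i = _) := by
    change ∑ i ∈ J, c * s i = ∑ j ∈ Jᶜ, c * s j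
    rw [← Finset.mul_sum, ← Finset.mul_sum, hs]

def crossingUvecs (J : Finset (Fin m)) : Set (Fin m → ℚ) :=
  {v | ∃ i j : Fin m, i < j ∧ ((i ∈ J ∧ j ∉ J) ∨ (i ∉ J ∧ j ∈ J)) ∧ v = uvec i j}

theorem uvec_mem_crossingUvecs {J : Finset (Fin m)} {i j : Fin m} (hi : i ∈ J) (hj : j ∉ J) :
    uvec i j ∈ crossingUvecs J := by
  rcases lt_or_gt_of_ne (fun h : i = j => hj (h ▸ hi)) with h | h
  · exact ⟨i, j, h, Or.inl ⟨hi, hj⟩, rfl⟩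
  · exact ⟨j, i, h, Or.inr ⟨hj, hi⟩, uvec_comm i j⟩

theorem crossingUvecs_subset_balanceHyperplane (J : Finset (Fin m)) :
    crossingUvecs J ⊆ balanceHyperplane J := by
  rintro v ⟨i, j, hij, hJ, rfl⟩
  change ∑ l ∈ J, uvec i j l = ∑ l ∈ Jᶜ, uvec i j l
  rw [sum_uvec_apply hij.ne, sum_uvec_apply hij.ne]
  rcases hJ with ⟨hi, hj⟩ | ⟨hi, hj⟩ <;> simp [hi, hj]

theorem mem_coneGen_crossingUvecs {J : Finset (Fin m)} {s : Fin m → ℚ} (hs : 0 ≤ s)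
    (hJ : s ∈ balanceHyperplane J) : s ∈ coneGen (crossingUvecs J) := by
  change ∑ i ∈ J, s i = ∑ j ∈ Jᶜ, s j at hJ
  set T := ∑ i ∈ J, s i with hT
  have hle : ∀ l, s l ≤ T := fun l => by
    by_cases hl : l ∈ J
    · exact Finset.single_le_sum (fun i _ => hs i) hl
    · exact hJ ▸ Finset.single_le_sum (fun i _ => hs i) (Finset.mem_compl.2 hl)
  -- `T = 0` forces `s = 0`, so division by zero does no harm
  have hcancel : ∀ l, s l * T / T = s l := fun l =>
    mul_div_cancel_of_imp fun hT0 => le_antisymm (hT0 ▸ hle l) (hs l)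
  have hrow : ∀ i ∈ J, ∑ j ∈ Jᶜ, s i * s j / T = s i := fun i _ => by
    rw [← Finset.sum_div, ← Finset.mul_sum, ← hJ, hcancel]
  have hcol : ∀ j ∈ Jᶜ, ∑ i ∈ J, s i * s j / T = s j := fun j _ => by
    rw [← Finset.sum_div, ← Finset.sum_mul, mul_comm, hcancel]
  rw [← sum_smul_uvec_eq_of_marginals _ hrow hcol, ← Finset.sum_product']
  refine sum_smul_mem_coneGen _ _ _ (fun p _ => ?_) fun p hp => ?_
  · exact div_nonneg (mul_nonneg (hs _) (hs _)) ((hs p.1).trans (hle p.1))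
  · rw [Finset.mem_product, Finset.mem_compl] at hp
    exact uvec_mem_crossingUvecs hp.1 hp.2

end Uvec

theorem coneGen_uvec_wall_eq_general
    {m : ℕ} (J : Finset (Fin m)) :
    coneGen {v | ∃ i j : Fin m, i < j ∧ ((i ∈ J ∧ j ∉ J) ∨ (i ∉ J ∧ j ∈ J)) ∧ v = uvec i j}
        = {s | (∀ l, 0 ≤ s l) ∧ ∑ i ∈ J, s i = ∑ j ∈ Jᶜ, s j} ∧
      coneGen {v | ∃ i j : Fin m, i < j ∧ ((i ∈ J ∧ j ∉ J) ∨ (i ∉ J ∧ j ∈ J)) ∧ v = uvec i j}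
        = coneGen {v | ∃ i j : Fin m, i < j ∧ v = uvec i j} ∩
            {s | ∑ i ∈ J, s i = ∑ j ∈ Jᶜ, s j} := by
  have hwall : coneGen (crossingUvecs J) ⊆ balanceHyperplane J :=
    coneGen_subset_submodule (crossingUvecs_subset_balanceHyperplane J)
  have hnonneg : ∀ v ∈ crossingUvecs J, 0 ≤ v := by
    rintro v ⟨i, j, -, -, rfl⟩
    exact uvec_nonneg i j
  have hcross : coneGen (crossingUvecs J) = {s | 0 ≤ s ∧ s ∈ balanceHyperplane J} :=
    subset_antisymm (fun v hv => ⟨nonneg_of_mem_coneGen hnonneg hv, hwall hv⟩)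
      fun s hs => mem_coneGen_crossingUvecs hs.1 hs.2
  refine ⟨hcross, subset_antisymm ?_ ?_⟩
  · refine fun v hv => ⟨coneGen_mono ?_ hv, hwall hv⟩
    rintro w ⟨i, j, hij, -, rfl⟩
    exact ⟨i, j, hij, rfl⟩
  · intro v hv
    refine mem_coneGen_crossingUvecs (nonneg_of_mem_coneGen ?_ hv.1) hv.2
    rintro w ⟨i, j, -, rfl⟩
    exact uvec_nonneg i j

/-- Let `J ⊆ {1,…,m}` with `1 < |J| ≤ m/2`. Then the convex cone generated over
`ℚ_{≥0}` by the vectors `u_{ij}` with exactly one of `i, j` in `J` equals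
`{s : s ≥ 0, Σ_{i∈J} s_i = Σ_{j∉J} s_j}`; in particular, it equals the
intersection of the cone generated by all the `u_{ij}` with the hyperplane
`ℋ_J = {s : Σ_{i∈J} s_i = Σ_{j∉J} s_j}`. -/
theorem coneGen_uvec_wall_eq
    {m : ℕ} (hm : 2 ≤ m) (J : Finset (Fin m)) (h1 : 1 < J.card) (h2 : 2 * J.card ≤ m) :
    coneGen {v | ∃ i j : Fin m, i < j ∧ ((i ∈ J ∧ j ∉ J) ∨ (i ∉ J ∧ j ∈ J)) ∧ v = uvec i j}
        = {s | (∀ l, 0 ≤ s l) ∧ ∑ i ∈ J, s i = ∑ j ∈ Jᶜ, s j} ∧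
      coneGen {v | ∃ i j : Fin m, i < j ∧ ((i ∈ J ∧ j ∉ J) ∨ (i ∉ J ∧ j ∈ J)) ∧ v = uvec i j}
        = coneGen {v | ∃ i j : Fin m, i < j ∧ v = uvec i j} ∩
            {s | ∑ i ∈ J, s i = ∑ j ∈ Jᶜ, s j} :=
  coneGen_uvec_wall_eq_general J
end

section
/- For integers 1 ≤ n ≤ m, the convex cone in ℚ^m generated over ℚ_{≥0} by the indicator vectors e_S := Σ_{i∈S} e_i of all n-element subsets S ⊆ {1,…,m} equals the set {(s_1,…,s_m) ∈ ℚ^m : s_j ≥ 0 for all j, and n·s_j ≤ s_1 + ⋯ + s_m for all j}. -/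
open Finset PointedCone

section Indicator

variable {ι R : Type*} [DecidableEq ι]

def indicatorVec [Zero R] [One R] (S : Finset ι) : ι → R := fun i => if i ∈ S then 1 else 0

variable [Ring R] {s : ι → R} {S : Finset ι} {t : R} {j : ι}

theorem sub_smul_indicatorVec_apply_of_mem (hj : j ∈ S) :
    (s - t • indicatorVec S : ι → R) j = s j - t := by
  simp [indicatorVec, hj]

theorem sub_smul_indicatorVec_apply_of_notMem (hj : j ∉ S) :
    (s - t • indicatorVec S : ι → R) j = s j := by
  simp [indicatorVec, hj]

theorem sum_indicatorVec [Fintype ι] : ∑ l, (indicatorVec S : ι → R) l = #S := by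
  simp [indicatorVec]

theorem sum_sub_smul_indicatorVec [Fintype ι] :
    ∑ l, (s - t • indicatorVec S : ι → R) l = ∑ l, s l - #S * t := by
  simp [sum_sub_distrib, ← mul_sum, sum_indicatorVec, (Nat.cast_commute _ t).eq]

end Indicator

section Slack

variable {ι R : Type*} [Fintype ι] [Ring R] [DecidableEq R] {n : ℕ} {s : ι → R}

def nonzeroCoords (s : ι → R) : Finset ι := {j | s j ≠ 0}

def tightCoords (n : ℕ) (s : ι → R) : Finset ι := {j | (n : R) * s j = ∑ l, s l}

variable [DecidableEq ι] {S : Finset ι} {t : R}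

def slackCount (n : ℕ) (s : ι → R) : ℕ := #(nonzeroCoords s) + #(tightCoords n s)ᶜ

theorem slackCount_sub_smul_indicatorVec_lt (hS : #S = n) (htight : tightCoords n s ⊆ S)
    (hnz : S ⊆ nonzeroCoords s) {j₀ : ι}
    (hj₀ : j₀ ∈ S ∧ t = s j₀ ∨ j₀ ∉ S ∧ n * t = ∑ l, s l - n * s j₀) :
    slackCount n (s - t • indicatorVec S) < slackCount n s := by
  have hsum : ∑ l, (s - t • indicatorVec S : ι → R) l = ∑ l, s l - n * t := by
    rw [sum_sub_smul_indicatorVec, hS]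
  have hnz' : nonzeroCoords (s - t • indicatorVec S) ⊆ nonzeroCoords s := by
    intro j hj
    by_cases hjS : j ∈ S
    · exact hnz hjS
    · simp only [nonzeroCoords, mem_filter, mem_univ, true_and] at hj ⊢
      rwa [sub_smul_indicatorVec_apply_of_notMem hjS] at hj
  have htight' : (tightCoords n (s - t • indicatorVec S))ᶜ ⊆ (tightCoords n s)ᶜ := by
    refine compl_subset_compl.2 fun j hj => ?_
    have hjS := htight hj
    simp only [tightCoords, mem_filter, mem_univ, true_and] at hj ⊢
    rw [hsum, sub_smul_indicatorVec_apply_of_mem hjS, mul_sub, hj]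
  rcases hj₀ with ⟨hjS, rfl⟩ | ⟨hjS, ht⟩
  · refine add_lt_add_of_lt_of_le (card_lt_card ((ssubset_iff_of_subset hnz').2
      ⟨j₀, hnz hjS, ?_⟩)) (card_le_card htight')
    simp only [nonzeroCoords, mem_filter, mem_univ, true_and, not_not]
    rw [sub_smul_indicatorVec_apply_of_mem hjS, sub_self]
  · refine add_lt_add_of_le_of_lt (card_le_card hnz') (card_lt_card ((ssubset_iff_of_subset
      htight').2 ⟨j₀, mem_compl.2 fun h => hjS (htight h), ?_⟩))
    simp only [tightCoords, mem_compl, mem_filter, mem_univ, true_and, not_not]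
    rw [hsum, sub_smul_indicatorVec_apply_of_notMem hjS, ht, sub_sub_cancel]

end Slack

section Hypersimplex

variable {ι 𝕜 : Type*} [Fintype ι] [Field 𝕜] [LinearOrder 𝕜] [IsStrictOrderedRing 𝕜]
  {n : ℕ} {s : ι → 𝕜}

def hypersimplexCone (n : ℕ) : PointedCone 𝕜 (ι → 𝕜) where
  carrier := {s | (∀ j, 0 ≤ s j) ∧ ∀ j, (n : 𝕜) * s j ≤ ∑ l, s l}
  zero_mem' := by simp
  add_mem' {s t} hs ht := by
    refine ⟨fun j => add_nonneg (hs.1 j) (ht.1 j), fun j => ?_⟩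
    simpa only [Pi.add_apply, mul_add, sum_add_distrib] using add_le_add (hs.2 j) (ht.2 j)
  smul_mem' c s hs := by
    refine ⟨fun j => smul_nonneg c.2 (hs.1 j), fun j => ?_⟩
    simpa only [Pi.smul_apply, ← smul_sum, mul_smul_comm, Nonneg.coe_smul] using
      smul_le_smul_of_nonneg_left (hs.2 j) c.2

theorem sum_pos_of_mem_hypersimplexCone (hs : s ∈ hypersimplexCone n) (hs0 : s ≠ 0) :
    0 < ∑ l, s l := by
  refine (sum_nonneg fun j _ => hs.1 j).lt_of_ne fun hT => hs0 (funext fun j => ?_)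
  exact (sum_eq_zero_iff_of_nonneg fun i _ => hs.1 i).1 hT.symm j (mem_univ j)

theorem card_tightCoords_le (hs : s ∈ hypersimplexCone n) (hT : 0 < ∑ l, s l) :
    #(tightCoords n s) ≤ n := by
  have key : (#(tightCoords n s) : 𝕜) * ∑ l, s l ≤ n * ∑ l, s l :=
    calc (#(tightCoords n s) : 𝕜) * ∑ l, s l = ∑ j ∈ tightCoords n s, (n : 𝕜) * s j := by
          rw [← nsmul_eq_mul, ← sum_const]
          exact sum_congr rfl fun j hj => (mem_filter.1 hj).2.symm
      _ = n * ∑ j ∈ tightCoords n s, s j := (mul_sum ..).symm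
      _ ≤ n * ∑ l, s l := mul_le_mul_of_nonneg_left
          (sum_le_sum_of_subset_of_nonneg (subset_univ _) fun i _ _ => hs.1 i) n.cast_nonneg
  exact_mod_cast le_of_mul_le_mul_right key hT

theorem le_card_nonzeroCoords (hs : s ∈ hypersimplexCone n) (hT : 0 < ∑ l, s l) :
    n ≤ #(nonzeroCoords s) := by
  have key : (n : 𝕜) * ∑ l, s l ≤ #(nonzeroCoords s) * ∑ l, s l :=
    calc (n : 𝕜) * ∑ l, s l = ∑ j ∈ nonzeroCoords s, (n : 𝕜) * s j := by
          rw [← mul_sum, nonzeroCoords, sum_filter_ne_zero]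
      _ ≤ ∑ j ∈ nonzeroCoords s, ∑ l, s l := sum_le_sum fun j _ => hs.2 j
      _ = #(nonzeroCoords s) * ∑ l, s l := by rw [sum_const, nsmul_eq_mul]
  exact_mod_cast le_of_mul_le_mul_right key hT

theorem exists_tightCoords_subset_card_eq (hs : s ∈ hypersimplexCone n) (hs0 : s ≠ 0) :
    ∃ S, tightCoords n s ⊆ S ∧ S ⊆ nonzeroCoords s ∧ #S = n := by
  have hT := sum_pos_of_mem_hypersimplexCone hs hs0
  have htight : tightCoords n s ⊆ nonzeroCoords s := by
    intro j hj
    simp only [tightCoords, nonzeroCoords, mem_filter, mem_univ, true_and] at hj ⊢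
    intro hsj
    rw [hsj, mul_zero] at hj
    exact hT.ne hj
  exact exists_subsuperset_card_eq htight (card_tightCoords_le hs hT) (le_card_nonzeroCoords hs hT)

variable [DecidableEq ι] {S : Finset ι} {t : 𝕜}

theorem sub_smul_indicatorVec_mem (hs : s ∈ hypersimplexCone n) (hS : #S = n)
    (hmem : ∀ j ∈ S, t ≤ s j) (hnotMem : ∀ j ∉ S, n * t ≤ ∑ l, s l - n * s j) :
    s - t • indicatorVec S ∈ hypersimplexCone n := by
  have hsum : ∑ l, (s - t • indicatorVec S : ι → 𝕜) l = ∑ l, s l - n * t := by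
    rw [sum_sub_smul_indicatorVec, hS]
  refine ⟨fun j => ?_, fun j => ?_⟩ <;> by_cases hj : j ∈ S
  · rw [sub_smul_indicatorVec_apply_of_mem hj]; linarith [hmem j hj]
  · rw [sub_smul_indicatorVec_apply_of_notMem hj]; exact hs.1 j
  · rw [hsum, sub_smul_indicatorVec_apply_of_mem hj]; linarith [hs.2 j]
  · rw [hsum, sub_smul_indicatorVec_apply_of_notMem hj]; linarith [hnotMem j hj]

theorem exists_sub_smul_indicatorVec_mem_slackCount_lt (hn : 0 < n)
    (hs : s ∈ hypersimplexCone n) (hs0 : s ≠ 0) :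
    ∃ S : Finset ι, #S = n ∧ ∃ t : 𝕜, 0 ≤ t ∧ s - t • indicatorVec S ∈ hypersimplexCone n ∧
      slackCount n (s - t • indicatorVec S) < slackCount n s := by
  obtain ⟨S, htight, hnz, hS⟩ := exists_tightCoords_subset_card_eq hs hs0
  have hn' : (0 : 𝕜) < n := by exact_mod_cast hn
  have : Nonempty ι := (Function.ne_iff.1 hs0).nonempty
  -- `step j` is the largest `t` allowed by the inequalities at the coordinate `j`
  let step : ι → 𝕜 := fun j => if j ∈ S then s j else (∑ l, s l - n * s j) / n
  obtain ⟨j₀, -, hj₀⟩ := exists_min_image univ step univ_nonempty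
  have hstep : ∀ j, 0 ≤ step j := fun j => by
    by_cases hj : j ∈ S
    · simpa only [step, if_pos hj] using hs.1 j
    · simpa only [step, if_neg hj] using div_nonneg (sub_nonneg.2 (hs.2 j)) hn'.le
  refine ⟨S, hS, step j₀, hstep j₀, sub_smul_indicatorVec_mem hs hS
    (fun j hj => (hj₀ j (mem_univ j)).trans_eq (if_pos hj))
    (fun j hj => (le_div_iff₀' hn').1 ((hj₀ j (mem_univ j)).trans_eq (if_neg hj))),
    slackCount_sub_smul_indicatorVec_lt (j₀ := j₀) hS htight hnz ?_⟩
  by_cases hj : j₀ ∈ S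
  · exact .inl ⟨hj, if_pos hj⟩
  · exact .inr ⟨hj, by rw [show step j₀ = _ from if_neg hj, mul_div_cancel₀ _ hn'.ne']⟩

theorem mem_hull_of_mem_hypersimplexCone (hn : 0 < n) {s : ι → 𝕜}
    (hs : s ∈ hypersimplexCone n) :
    s ∈ hull 𝕜 {v | ∃ S : Finset ι, #S = n ∧ v = indicatorVec S} := by
  obtain rfl | hs0 := eq_or_ne s 0
  · exact zero_mem _
  obtain ⟨S, hS, t, ht, hs', hlt⟩ := exists_sub_smul_indicatorVec_mem_slackCount_lt hn hs hs0
  have ih := mem_hull_of_mem_hypersimplexCone hn hs'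
  have hsplit : s = s - t • indicatorVec S + (⟨t, ht⟩ : {c : 𝕜 // 0 ≤ c}) • indicatorVec S := by
    rw [Nonneg.mk_smul, sub_add_cancel]
  rw [hsplit]
  exact add_mem ih (Submodule.smul_mem _ _ (subset_hull ⟨S, hS, rfl⟩))
termination_by slackCount n s

theorem indicatorVec_mem_hypersimplexCone (hS : #S = n) :
    (indicatorVec S : ι → 𝕜) ∈ hypersimplexCone n := by
  refine ⟨fun j => ?_, fun j => ?_⟩
  · by_cases hj : j ∈ S <;> simp [indicatorVec, hj]
  · rw [sum_indicatorVec, hS]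
    by_cases hj : j ∈ S <;> simp [indicatorVec, hj]

theorem hull_indicatorVec_eq_hypersimplexCone (hn : 0 < n) :
    hull 𝕜 {v | ∃ S : Finset ι, #S = n ∧ v = indicatorVec S} = hypersimplexCone n :=
  le_antisymm (Submodule.span_le.2 fun _ ⟨_, hS, hv⟩ => hv ▸ indicatorVec_mem_hypersimplexCone hS)
    fun _ => mem_hull_of_mem_hypersimplexCone hn

end Hypersimplex

theorem coneGen_eq_hull {m : ℕ} (S : Set (Fin m → ℚ)) : coneGen S = hull ℚ S := by
  ext v
  constructor
  · rintro ⟨s, c, hc, rfl⟩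
    refine sum_mem fun w hw => ?_
    rw [← Nonneg.mk_smul _ (hc w hw).1]
    exact Submodule.smul_mem _ _ (subset_hull (hc w hw).2)
  · intro hv
    obtain ⟨c, hsupp, hc, rfl⟩ := mem_hull_set.1 hv
    exact ⟨c.support, c, fun w hw => ⟨hc w, hsupp hw⟩, rfl⟩

theorem coneGen_indicators_eq_general
    {m n : ℕ} (hn : 1 ≤ n) :
    coneGen {v : Fin m → ℚ | ∃ S : Finset (Fin m), S.card = n ∧
        v = fun i => if i ∈ S then 1 else 0} =
      {s | (∀ j, 0 ≤ s j) ∧ ∀ j, (n : ℚ) * s j ≤ ∑ l, s l} := by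
  rw [coneGen_eq_hull]
  exact congrArg SetLike.coe (hull_indicatorVec_eq_hypersimplexCone hn)

/-- For `1 ≤ n ≤ m`, the convex cone in `ℚ^m` generated over `ℚ_{≥0}` by the
indicator vectors `e_S` of all `n`-element subsets `S ⊆ {1,…,m}` equals
`{s ∈ ℚ^m : s_j ≥ 0 for all j, and n·s_j ≤ s_1 + ⋯ + s_m for all j}`. -/
theorem coneGen_indicators_eq
    {m n : ℕ} (hn : 1 ≤ n) (hnm : n ≤ m) :
    coneGen {v : Fin m → ℚ | ∃ S : Finset (Fin m), S.card = n ∧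
        v = fun i => if i ∈ S then 1 else 0} =
      {s | (∀ j, 0 ≤ s j) ∧ ∀ j, (n : ℚ) * s j ≤ ∑ l, s l} :=
  coneGen_indicators_eq_general hn
end
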